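/- Let α ∈ [0,1), let f(α) = 20 if α ∈ [0,1/2], f(α) = 25 if α ∈ (1/2,5/7], and f(α) = 7/(1−α) + 3 if α ∈ (5/7,1), and let n be an integer with n ≥ f(α). Then the A_α-spectral radius of the graph K₂ ∨ (K_{n−6} ∪ 4K₁) satisfies ρ_α(K₂ ∨ (K_{n−6} ∪ 4K₁)) < n − 3. -/

import Mathlib

open Finset

/-- The join `G ∨g H` of two graphs: the disjoint union together with all edges
between the two parts. -/
def SimpleGraph.gjoin {α β : Type*} (G : SimpleGraph α) (H : SimpleGraph β) :
    SimpleGraph (α ⊕ β) where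
  Adj u v := match u, v with
    | Sum.inl u, Sum.inl v => G.Adj u v
    | Sum.inr u, Sum.inr v => H.Adj u v
    | _, _ => True
  symm := ⟨fun u v => match u, v with
    | Sum.inl u, Sum.inl v => G.adj_symm
    | Sum.inr u, Sum.inr v => H.adj_symm
    | Sum.inl _, Sum.inr _ | Sum.inr _, Sum.inl _ => fun _ => trivial⟩
  loopless := ⟨fun u => by cases u <;> simp⟩

infixl:60 " ∨g " => SimpleGraph.gjoin

/-- The `A_α`-matrix `α • D(G) + (1-α) • A(G)` of a graph `G`. -/
noncomputable def aAlphaMatrix {V : Type*} [Fintype V] [DecidableEq V]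
    (α : ℝ) (G : SimpleGraph V) : Matrix V V ℝ := by
  classical
  exact α • Matrix.diagonal (fun v => (G.degree v : ℝ)) + (1 - α) • G.adjMatrix ℝ

/-- The `A_α`-spectral radius `ρ_α(G)`: the largest eigenvalue of `A_α(G)`. -/
noncomputable def rhoAlpha {V : Type*} [Fintype V] [DecidableEq V]
    (α : ℝ) (G : SimpleGraph V) : ℝ :=
  sSup (spectrum ℝ (aAlphaMatrix α G))

/-- The signless Laplacian matrix `Q(G) = D(G) + A(G)`. -/
noncomputable def signlessLaplacian {V : Type*} [Fintype V] [DecidableEq V]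
    (G : SimpleGraph V) : Matrix V V ℝ := by
  classical
  exact Matrix.diagonal (fun v => (G.degree v : ℝ)) + G.adjMatrix ℝ

/-- `q(G)`: the largest eigenvalue of the signless Laplacian matrix of `G`. -/
noncomputable def qIndex {V : Type*} [Fintype V] [DecidableEq V]
    (G : SimpleGraph V) : ℝ :=
  sSup (spectrum ℝ (signlessLaplacian G))

/-- The number of edges (the size) of a graph. -/
noncomputable def edgeCount {V : Type*} [Fintype V] [DecidableEq V]
    (G : SimpleGraph V) : ℕ := by
  classical
  exact G.edgeFinset.card

/-- `i(G - S)`: the number of isolated vertices of the graph obtained from `G`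
by deleting the vertices of `S` together with all edges incident to `S`. -/
noncomputable def isolGminus {V : Type*} [Fintype V] [DecidableEq V]
    (G : SimpleGraph V) (S : Finset V) : ℕ := by
  classical
  exact (Finset.univ.filter (fun v => v ∉ S ∧ ∀ u, G.Adj v u → u ∈ S)).card

/-- `F(n)`: the edge bound from Theorem 1.1. -/
def Fbound (n : ℕ) : ℕ :=
  if n = 6 then 9 else if n = 8 then 18 else (n - 2).choose 2 + 2

/-- `f(α)`: the order bound from Theorem 1.2. -/
noncomputable def fAlpha (α : ℝ) : ℝ :=
  if α ≤ 1 / 2 then 20 else if α ≤ 5 / 7 then 25 else 7 / (1 - α) + 3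

/-- The graph `K₂ ∨ (K_{n-6} ∪ 4K₁)`. -/
def G3 (n : ℕ) : SimpleGraph (Fin 2 ⊕ (Fin (n - 6) ⊕ Fin 4)) :=
  (⊤ : SimpleGraph (Fin 2)) ∨g ((⊤ : SimpleGraph (Fin (n - 6))) ⊕g (⊥ : SimpleGraph (Fin 4)))


/-! A nonnegative matrix `M` with `M x < t • x` entrywise for some positive vector `x` has all its
real eigenvalues in `(-t, t)` (Collatz–Wielandt): at an index maximising `|v i| / x i` for an
eigenvector `v`, the eigenvalue equation is dominated by the row of `M x`.

For `A_α(K₂ ∨ (K_{n-6} ∪ 4K₁))` take `x` equal to `n - 5` on `K₂`, to `(1 - α)(n - 5)` on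
`K_{n-6}` and to `4(1 - α)` on the isolated vertices. The rows of `K_{n-6}` and of the isolated
vertices fall below `(n - 3) x` for every `α < 1` and `n ≥ 20`; on `K₂` the gap is the quadratic
`α(1-α)s² + (α² - 5α + 2)s - 16(1-α)²` in `s = n - 5`, which `n ≥ f(α)` makes positive. -/

open Matrix

namespace Matrix

variable {V : Type*} [Fintype V] {M : Matrix V V ℝ} {x : V → ℝ} {t : ℝ}

theorem abs_eigenvalue_lt_of_mulVec_lt (hM : ∀ i j, 0 ≤ M i j) (hx : ∀ i, 0 < x i)
    (hMx : ∀ i, (M *ᵥ x) i < t * x i) {μ : ℝ} {v : V → ℝ} (hv : M *ᵥ v = μ • v)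
    (hv0 : v ≠ 0) : |μ| < t := by
  obtain ⟨k, hk⟩ := Function.ne_iff.mp hv0
  obtain ⟨i, -, hi⟩ := Finset.univ.exists_max_image (fun j => |v j| / x j) ⟨k, mem_univ k⟩
  set r := |v i| / x i
  have hr : 0 < r := (div_pos (abs_pos.2 hk) (hx k)).trans_le (hi k (mem_univ k))
  have hvx : ∀ j, |v j| ≤ r * x j := fun j =>
    (div_le_iff₀ (hx j)).1 (hi j (mem_univ j))
  have hvi : |v i| = r * x i := (div_mul_cancel₀ _ (hx i).ne').symm
  have key : |μ| * |v i| < t * |v i| := calc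
    |μ| * |v i| = |∑ j, M i j * v j| := by
      rw [← abs_mul, ← smul_eq_mul, ← Pi.smul_apply, ← hv]; rfl
    _ ≤ ∑ j, M i j * |v j| := by
      refine (abs_sum_le_sum_abs _ _).trans_eq (sum_congr rfl fun j _ => ?_)
      rw [abs_mul, abs_of_nonneg (hM i j)]
    _ ≤ ∑ j, M i j * (r * x j) :=
      sum_le_sum fun j _ => mul_le_mul_of_nonneg_left (hvx j) (hM i j)
    _ = r * (M *ᵥ x) i := by
      simp only [mulVec, dotProduct, mul_sum]; exact sum_congr rfl fun j _ => by ring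
    _ < r * (t * x i) := mul_lt_mul_of_pos_left (hMx i) hr
    _ = t * |v i| := by rw [hvi]; ring
  exact lt_of_mul_lt_mul_right key (abs_nonneg _)

theorem sSup_spectrum_lt_of_mulVec_lt [DecidableEq V] [Nonempty V] (hM : ∀ i j, 0 ≤ M i j)
    (hx : ∀ i, 0 < x i) (hMx : ∀ i, (M *ᵥ x) i < t * x i) : sSup (spectrum ℝ M) < t := by
  rcases (spectrum ℝ M).eq_empty_or_nonempty with h | h
  · obtain ⟨i⟩ := ‹Nonempty V›
    have : 0 ≤ (M *ᵥ x) i := sum_nonneg fun j _ => mul_nonneg (hM i j) (hx j).le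
    rw [h, Real.sSup_empty]
    exact pos_of_mul_pos_left (this.trans_lt (hMx i)) (hx i).le
  rw [(finite_spectrum M).csSup_lt_iff h]
  intro μ hμ
  rw [← spectrum_toLin', ← Module.End.hasEigenvalue_iff_mem_spectrum] at hμ
  obtain ⟨v, hv, hv0⟩ := hμ.exists_hasEigenvector
  rw [Module.End.mem_eigenspace_iff, toLin'_apply] at hv
  exact (le_abs_self μ).trans_lt (abs_eigenvalue_lt_of_mulVec_lt hM hx hMx hv hv0)

end Matrix

section AAlpha

variable {V : Type*} [Fintype V] [DecidableEq V] (α : ℝ) (G : SimpleGraph V)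

theorem aAlphaMatrix_eq [DecidableRel G.Adj] :
    aAlphaMatrix α G = α • diagonal (fun v => (G.degree v : ℝ)) + (1 - α) • G.adjMatrix ℝ := by
  unfold aAlphaMatrix
  congr!

theorem aAlphaMatrix_nonneg (hα0 : 0 ≤ α) (hα1 : α ≤ 1) (i j : V) :
    0 ≤ aAlphaMatrix α G i j := by
  classical
  have := sub_nonneg.2 hα1
  rw [aAlphaMatrix_eq]
  simp only [Matrix.add_apply, Matrix.smul_apply, smul_eq_mul, diagonal_apply,
    SimpleGraph.adjMatrix_apply]
  split_ifs <;> positivity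

theorem aAlphaMatrix_mulVec_apply [DecidableRel G.Adj] (x : V → ℝ) (i : V) :
    (aAlphaMatrix α G *ᵥ x) i = ∑ j, if G.Adj i j then α * x i + (1 - α) * x j else 0 := by
  simp only [aAlphaMatrix_eq, add_mulVec, smul_mulVec, Pi.add_apply, Pi.smul_apply, smul_eq_mul,
    mulVec_diagonal, SimpleGraph.adjMatrix_mulVec_apply]
  rw [← Finset.sum_filter, sum_add_distrib, sum_const, ← mul_sum,
    ← SimpleGraph.neighborFinset_eq_filter, SimpleGraph.card_neighborFinset_eq_degree, nsmul_eq_mul]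
  ring

end AAlpha

namespace SimpleGraph

variable {α β : Type*} (G : SimpleGraph α) (H : SimpleGraph β)

@[simp] theorem gjoin_adj_inl_inl {u v : α} : (G ∨g H).Adj (.inl u) (.inl v) ↔ G.Adj u v := Iff.rfl
@[simp] theorem gjoin_adj_inr_inr {u v : β} : (G ∨g H).Adj (.inr u) (.inr v) ↔ H.Adj u v := Iff.rfl
@[simp] theorem gjoin_adj_inl_inr (u : α) (v : β) : (G ∨g H).Adj (.inl u) (.inr v) := trivial
@[simp] theorem gjoin_adj_inr_inl (u : β) (v : α) : (G ∨g H).Adj (.inr u) (.inl v) := trivial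

theorem sum_ite_top_adj {V R : Type*} [Fintype V] [DecidableEq V] [Ring R] (u : V) (c : R) :
    ∑ v, (if (⊤ : SimpleGraph V).Adj u v then c else 0) = (Fintype.card V - 1 : R) * c := by
  have : Nonempty V := ⟨u⟩
  simp only [top_adj]
  rw [← Finset.sum_filter, Finset.filter_ne, sum_const, card_erase_of_mem (mem_univ u), card_univ,
    nsmul_eq_mul, Nat.cast_sub Fintype.card_pos, Nat.cast_one]

end SimpleGraph

section Join

variable {V₁ V₂ V₃ : Type*} [Fintype V₁] [Fintype V₂] [Fintype V₃]
  [DecidableEq V₁] [DecidableEq V₂] [DecidableEq V₃]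

theorem aAlphaMatrix_join_sum_mulVec (α a b c : ℝ) :
    aAlphaMatrix α ((⊤ : SimpleGraph V₁) ∨g ((⊤ : SimpleGraph V₂) ⊕g (⊥ : SimpleGraph V₃))) *ᵥ
        Sum.elim (fun _ => a) (Sum.elim (fun _ => b) (fun _ => c)) =
      Sum.elim
        (fun _ => (Fintype.card V₁ - 1) * (α * a + (1 - α) * a)
          + Fintype.card V₂ * (α * a + (1 - α) * b) + Fintype.card V₃ * (α * a + (1 - α) * c))
        (Sum.elim
          (fun _ => Fintype.card V₁ * (α * b + (1 - α) * a)
            + (Fintype.card V₂ - 1) * (α * b + (1 - α) * b))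
          (fun _ => Fintype.card V₁ * (α * c + (1 - α) * a))) := by
  classical
  ext (u | w | z) <;>
  · rw [aAlphaMatrix_mulVec_apply, Fintype.sum_sum_type, Fintype.sum_sum_type]
    simp only [SimpleGraph.gjoin_adj_inl_inl, SimpleGraph.gjoin_adj_inl_inr,
      SimpleGraph.gjoin_adj_inr_inl, SimpleGraph.gjoin_adj_inr_inr, SimpleGraph.sum_adj,
      SimpleGraph.bot_adj, SimpleGraph.sum_ite_top_adj, Sum.elim_inl, Sum.elim_inr, ↓reduceIte,
      sum_const, card_univ, nsmul_eq_mul]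
    ring

end Join

section OrderBound

variable {α : ℝ}

theorem twenty_le_fAlpha (hα1 : α < 1) : 20 ≤ fAlpha α := by
  unfold fAlpha
  split_ifs with h₁ h₂
  · norm_num
  · norm_num
  · have : 17 ≤ 7 / (1 - α) := by
      rw [le_div_iff₀ (by linarith)]
      linarith
    linarith

theorem quadratic_pos_of_fAlpha_le (hα0 : 0 ≤ α) (hα1 : α < 1) {N : ℝ} (hN : fAlpha α ≤ N) :
    0 < α * (1 - α) * (N - 5) ^ 2 + (α ^ 2 - 5 * α + 2) * (N - 5) - 16 * (1 - α) ^ 2 := by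
  have hβ : 0 < 1 - α := by linarith
  unfold fAlpha at hN
  split_ifs at hN with h₁ h₂
  · nlinarith [mul_nonneg (mul_nonneg hα0 hβ.le) (by linarith : (0:ℝ) ≤ N - 20),
      mul_nonneg hα0 (by linarith : (0:ℝ) ≤ 1 / 2 - α)]
  · nlinarith [mul_nonneg (mul_nonneg hα0 hβ.le) (by linarith : (0:ℝ) ≤ N - 25),
      mul_nonneg (by linarith : (0:ℝ) ≤ 5 / 7 - α) (by linarith : (0:ℝ) ≤ α - 1 / 2)]
  · have h7 : 7 ≤ (1 - α) * (N - 3) := by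
      rw [mul_comm, ← div_le_iff₀ hβ]
      linarith
    have hN5 : 0 < N - 5 := by nlinarith
    nlinarith [mul_nonneg (by linarith : (0:ℝ) ≤ (1 - α) * (N - 3) - 7) (mul_nonneg hα0 hN5.le),
      mul_nonneg hβ.le (by linarith : (0:ℝ) ≤ α - 5 / 7)]

end OrderBound

theorem rhoAlpha_G3_lt (α : ℝ) (hα0 : 0 ≤ α) (hα1 : α < 1)
    (n : ℕ) (hn : fAlpha α ≤ (n : ℝ)) :
    rhoAlpha α (G3 n) < (n : ℝ) - 3 := by
  have hβ : 0 < 1 - α := by linarith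
  have h20 : (20 : ℝ) ≤ n := (twenty_le_fAlpha hα1).trans hn
  have hcard : ((n - 6 : ℕ) : ℝ) = n - 6 := by
    rw [Nat.cast_sub (by exact_mod_cast (by linarith : (6 : ℝ) ≤ n))]
    norm_num
  have : Nonempty (Fin 2 ⊕ (Fin (n - 6) ⊕ Fin 4)) := ⟨.inl 0⟩
  refine Matrix.sSup_spectrum_lt_of_mulVec_lt (aAlphaMatrix_nonneg α _ hα0 hα1.le)
    (x := Sum.elim (fun _ => (n : ℝ) - 5)
      (Sum.elim (fun _ => (1 - α) * (n - 5)) (fun _ => 4 * (1 - α)))) ?_ ?_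
  · rintro (_ | _ | _) <;> simp only [Sum.elim_inl, Sum.elim_inr] <;> nlinarith
  · rw [G3, aAlphaMatrix_join_sum_mulVec]
    rintro (_ | _ | _) <;> simp only [Sum.elim_inl, Sum.elim_inr, Fintype.card_fin, hcard]
    · linear_combination quadratic_pos_of_fAlpha_le hα0 hα1 hn
    · linear_combination 2 * mul_pos (pow_pos hβ 2) (by linarith : (0 : ℝ) < n - 5)
    · linear_combination mul_pos hβ (by linarith : (0 : ℝ) < 2 * n - 2 - 8 * α)
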